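/- arXiv:1310.2320 — 7 statements merged into one kernel-verified Lean document; each statement's English description precedes it below -/
import Mathlib

section
/- Let ℰ be a bundle event structure. If x and y are configurations of ℰ with x ⊆ y, then the lposet (x, ≼_x, λ|_x) is a prefix of the lposet (y, ≼_y, λ|_y). -/
open Classical

namespace PCKA

/-- A bundle event structure over event universe `Ev` and alphabet `A`:
a set of events, a conflict relation, a bundle relation, a partial labelling
(modelled via `Option`) and a set of final events. -/
structure BES (Ev A : Type) where
  E : Set Ev
  conflict : Ev → Ev → Prop
  bundle : Set Ev → Ev → Prop
  lab : Ev → Option A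
  final : Set Ev

variable {Ev A : Type}

/-- Well-formedness of a bundle event structure. -/
def IsBES (ℰ : BES Ev A) : Prop :=
  (∀ e, ¬ ℰ.conflict e e) ∧
  (∀ e e', ℰ.conflict e e' → ℰ.conflict e' e) ∧
  (∀ e e', ℰ.conflict e e' → e ∈ ℰ.E ∧ e' ∈ ℰ.E) ∧
  (∀ x e, ℰ.bundle x e → e ∈ ℰ.E ∧ x ⊆ ℰ.E ∧
    ∀ a ∈ x, ∀ b ∈ x, a ≠ b → ℰ.conflict a b) ∧
  (∀ e, ℰ.lab e ≠ none → e ∈ ℰ.E) ∧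
  ℰ.final ⊆ ℰ.E ∧
  (∀ a ∈ ℰ.final, ∀ b ∈ ℰ.final, a ≠ b → ℰ.conflict a b)

/-- `α` is an event trace of `ℰ`: every event is enabled by each of its bundles
and is distinct from and conflict-free with all earlier events. -/
def IsTrace (ℰ : BES Ev A) (α : List Ev) : Prop :=
  ∀ l e r, α = l ++ e :: r →
    e ∈ ℰ.E ∧
    (∀ x, ℰ.bundle x e → ∃ e' ∈ l, e' ∈ x) ∧
    (∀ e' ∈ l, e ≠ e' ∧ ¬ ℰ.conflict e e')

/-- A configuration is the set of events of some event trace (a linearisation). -/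
def IsConfig (ℰ : BES Ev A) (x : Set Ev) : Prop :=
  ∃ α : List Ev, IsTrace ℰ α ∧ {e | e ∈ α} = x

/-- Adjacent occurrences in a list. -/
def traceAdj (α : List Ev) (a b : Ev) : Prop := ∃ l r, α = l ++ a :: b :: r

/-- The order `≼_α` induced by an event trace: reflexive transitive closure of
adjacency in the trace. -/
def traceOrder (α : List Ev) : Ev → Ev → Prop := Relation.ReflTransGen (traceAdj α)

/-- The causal order `≼_x` of a configuration: the intersection of the orders
of all its linearisations. -/
def configOrder (ℰ : BES Ev A) (x : Set Ev) (a b : Ev) : Prop :=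
  ∀ α, IsTrace ℰ α → {e | e ∈ α} = x → traceOrder α a b

/-- The labelling restricted to a set of events. -/
noncomputable def labOn (ℰ : BES Ev A) (x : Set Ev) : Ev → Option A :=
  fun e => if e ∈ x then ℰ.lab e else none

/-- `(x, o, l)` is the lposet of the configuration `x` of `ℰ`. -/
def IsLposetOf (ℰ : BES Ev A) (x : Set Ev) (o : Ev → Ev → Prop)
    (l : Ev → Option A) : Prop :=
  IsConfig ℰ x ∧
  (∀ a b, o a b ↔ (a ∈ x ∧ b ∈ x ∧ configOrder ℰ x a b)) ∧
  l = labOn ℰ x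

/-- The lposet `(x,ox,lx)` is a prefix of the lposet `(y,oy,ly)`. -/
def LposetPrefix (x : Set Ev) (ox : Ev → Ev → Prop) (lx : Ev → Option A)
    (y : Set Ev) (oy : Ev → Ev → Prop) (ly : Ev → Option A) : Prop :=
  x ⊆ y ∧
  (∀ e ∈ x, ly e = lx e) ∧
  (∀ e e', oy e e' → e' ∈ x → e ∈ x ∧ ox e e')

/-- Restriction of a list to the elements of a set (the subsequence `α|_x`). -/
noncomputable def listRestrict (α : List Ev) (x : Set Ev) : List Ev :=
  α.filter (fun e => decide (e ∈ x))

/-- The sub-BES order `ℰ ⊑ ℱ`. -/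
def SubBES (ℰ ℱ : BES Ev A) : Prop :=
  ℰ.E ⊆ ℱ.E ∧
  (∀ e e', ℰ.conflict e e' ↔ (ℱ.conflict e e' ∧ e ∈ ℰ.E ∧ e' ∈ ℰ.E)) ∧
  (∀ x e, ℰ.bundle x e → ℱ.bundle x e) ∧
  (∀ x e, ℱ.bundle x e → e ∈ ℰ.E → x ⊆ ℰ.E ∧ ℰ.bundle x e) ∧
  (∀ e ∈ ℰ.E, ℰ.lab e = ℱ.lab e) ∧
  (∀ e, e ∈ ℰ.final ↔ (e ∈ ℱ.final ∧ e ∈ ℰ.E))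

/-- `ℰ` is the componentwise union of the chain `c`. -/
def IsChainUnion (c : ℕ → BES Ev A) (ℰ : BES Ev A) : Prop :=
  ℰ.E = (⋃ i, (c i).E) ∧
  (∀ e e', ℰ.conflict e e' ↔ ∃ i, (c i).conflict e e') ∧
  (∀ x e, ℰ.bundle x e ↔ ∃ i, (c i).bundle x e) ∧
  (∀ i, ∀ e ∈ (c i).E, ℰ.lab e = (c i).lab e) ∧
  (∀ e, e ∉ (⋃ i, (c i).E) → ℰ.lab e = none) ∧
  ℰ.final = (⋃ i, (c i).final)

/-- Immediate conflict. -/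
def ImmConflict (ℰ : BES Ev A) (e e' : Ev) : Prop :=
  ℰ.conflict e e' ∧
  ∃ x, IsConfig ℰ x ∧ IsConfig ℰ (x ∪ {e}) ∧ IsConfig ℰ (x ∪ {e'})

/-- A partial cluster: pairwise immediately conflicting, equally pointed events. -/
def PartialCluster (ℰ : BES Ev A) (K : Set Ev) : Prop :=
  K ⊆ ℰ.E ∧
  (∀ e ∈ K, ∀ e' ∈ K, e ≠ e' → ImmConflict ℰ e e') ∧
  (∀ e ∈ K, ∀ e' ∈ K, ∀ x, ℰ.bundle x e → ℰ.bundle x e')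

/-- A cluster is a maximal partial cluster. -/
def Cluster (ℰ : BES Ev A) (K : Set Ev) : Prop :=
  PartialCluster ℰ K ∧ ∀ H, PartialCluster ℰ H → K ⊆ H → H = K

/-- `⟨e⟩`: the intersection of all clusters containing `e`. -/
def cell (ℰ : BES Ev A) (e : Ev) : Set Ev :=
  ⋂₀ {K | Cluster ℰ K ∧ e ∈ K}

/-- `cfl x`: events in conflict with some event of `x`. -/
def cfl (ℰ : BES Ev A) (x : Set Ev) : Set Ev :=
  {e | e ∈ ℰ.E ∧ ∃ e' ∈ x, ℰ.conflict e e'}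

/-- Confusion freeness. -/
def ConfusionFree (ℰ : BES Ev A) : Prop :=
  (∀ e e', ImmConflict ℰ e e' → e ∈ cell ℰ e') ∧
  (∀ x e, IsConfig ℰ x → cell ℰ e ∩ x = ∅ → IsConfig ℰ (x ∪ {e}) →
    ∀ e'' ∈ cell ℰ e, IsConfig ℰ (x ∪ {e''}))

/-- Initial events: those pointed by no bundle. -/
def bInit (ℰ : BES Ev A) : Set Ev :=
  {e | e ∈ ℰ.E ∧ ∀ x, ¬ ℰ.bundle x e}

/-- Nondeterministic choice `ℰ + ℱ` (for disjoint BES). -/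
def bchoice (ℰ ℱ : BES Ev A) : BES Ev A where
  E := ℰ.E ∪ ℱ.E
  conflict := fun e e' => ℰ.conflict e e' ∨ ℱ.conflict e e' ∨
    (e ∈ bInit ℰ ∧ e' ∈ bInit ℱ) ∨ (e ∈ bInit ℱ ∧ e' ∈ bInit ℰ) ∨
    (e ∈ ℰ.final ∧ e' ∈ ℱ.final) ∨ (e ∈ ℱ.final ∧ e' ∈ ℰ.final)
  bundle := fun x e => ℰ.bundle x e ∨ ℱ.bundle x e
  lab := fun e => (ℰ.lab e).orElse (fun _ => ℱ.lab e)
  final := ℰ.final ∪ ℱ.final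

/-- Sequential composition `ℰ · ℱ` (for disjoint BES). -/
def bseq (ℰ ℱ : BES Ev A) : BES Ev A where
  E := ℰ.E ∪ ℱ.E
  conflict := fun e e' => ℰ.conflict e e' ∨ ℱ.conflict e e'
  bundle := fun x e => ℰ.bundle x e ∨ ℱ.bundle x e ∨ (x = ℰ.final ∧ e ∈ bInit ℱ)
  lab := fun e => (ℰ.lab e).orElse (fun _ => ℱ.lab e)
  final := ℱ.final

/-- Concurrent composition `ℰ ‖ ℱ` with fresh delimiter events `d₁, d₂`. -/
def bpar (ℰ ℱ : BES Ev A) (d₁ d₂ : Ev) : BES Ev A where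
  E := ℰ.E ∪ ℱ.E ∪ {d₁, d₂}
  conflict := fun e e' => ℰ.conflict e e' ∨ ℱ.conflict e e'
  bundle := fun x e => ℰ.bundle x e ∨ ℱ.bundle x e ∨
    (x = {d₁} ∧ (e ∈ bInit ℰ ∨ e ∈ bInit ℱ)) ∨
    (x = ℰ.final ∧ e = d₂) ∨ (x = ℱ.final ∧ e = d₂)
  lab := fun e => (ℰ.lab e).orElse (fun _ => ℱ.lab e)
  final := {d₂}

/-- Renaming of a BES along a map of events. -/
noncomputable def brename (g : Ev → Ev) (ℰ : BES Ev A) : BES Ev A where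
  E := g '' ℰ.E
  conflict := fun e e' => ∃ a b, ℰ.conflict a b ∧ e = g a ∧ e' = g b
  bundle := fun x e => ∃ y a, ℰ.bundle y a ∧ x = g '' y ∧ e = g a
  lab := fun e => if h : ∃ a, a ∈ ℰ.E ∧ g a = e then ℰ.lab h.choose else none
  final := g '' ℰ.final

/-- `ℰ'` is a (fresh) copy of `ℰ`. -/
def IsCopy (ℰ' ℰ : BES Ev A) : Prop :=
  ∃ g : Ev → Ev, Set.InjOn g ℰ.E ∧ ℰ' = brename g ℰ

/-- `𝒮` is the binary Kleene product `ℰ * ℱ`: the componentwise union of the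
chain `ℱ ⊑ ℱ + ℰ·ℱ ⊑ ⋯` built with fresh disjoint copies at each stage. -/
def IsStarOf (ℰ ℱ 𝒮 : BES Ev A) : Prop :=
  ∃ c : ℕ → BES Ev A,
    IsCopy (c 0) ℱ ∧
    (∀ i, ∃ ℰ' ℱ' : BES Ev A, IsCopy ℰ' ℰ ∧ IsCopy ℱ' ℱ ∧
      ℱ'.E ∩ (ℰ'.E ∪ (c i).E) = ∅ ∧ ℰ'.E ∩ (c i).E = ∅ ∧
      c (i + 1) = bchoice ℱ' (bseq ℰ' (c i)) ∧
      SubBES (c i) (c (i + 1))) ∧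
    IsChainUnion c 𝒮

/-- The basic BES `0` (deadlock). -/
def besZero : BES Ev A :=
  ⟨∅, fun _ _ => False, fun _ _ => False, fun _ => none, ∅⟩

/-- The basic BES `1` (skip), with a single unlabelled final event. -/
def besOne (e : Ev) : BES Ev A :=
  ⟨{e}, fun _ _ => False, fun _ _ => False, fun _ => none, {e}⟩

/-- The basic BES for a one-step action `a`. -/
noncomputable def besAct (e : Ev) (a : A) : BES Ev A :=
  ⟨{e}, fun _ _ => False, fun _ _ => False,
    fun e' => if e' = e then some a else none, {e}⟩

/-- Regular BES: built from the basic BES by `+`, `·`, `‖` and `*`. -/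
inductive Regular : BES Ev A → Prop
  | zero : Regular besZero
  | one (e : Ev) : Regular (besOne e)
  | act (e : Ev) (a : A) : Regular (besAct e a)
  | choice {ℰ ℱ : BES Ev A} : Regular ℰ → Regular ℱ → ℰ.E ∩ ℱ.E = ∅ →
      Regular (bchoice ℰ ℱ)
  | seq {ℰ ℱ : BES Ev A} : Regular ℰ → Regular ℱ → ℰ.E ∩ ℱ.E = ∅ →
      Regular (bseq ℰ ℱ)
  | par {ℰ ℱ : BES Ev A} (d₁ d₂ : Ev) : Regular ℰ → Regular ℱ →
      ℰ.E ∩ ℱ.E = ∅ → d₁ ≠ d₂ → d₁ ∉ ℰ.E ∪ ℱ.E → d₂ ∉ ℰ.E ∪ ℱ.E →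
      Regular (bpar ℰ ℱ d₁ d₂)
  | star {ℰ ℱ 𝒮 : BES Ev A} : Regular ℰ → Regular ℱ → IsStarOf ℰ ℱ 𝒮 →
      Regular 𝒮

/-- A probability distribution on a BES: a discrete distribution on events
whose support is contained in a single cell `⟨e⟩`. -/
def IsDistOn (ℰ : BES Ev A) (p : PMF Ev) : Prop :=
  ∃ e ∈ ℰ.E, p.support ⊆ cell ℰ e

/-- A probabilistic bundle event structure: a BES with a set of distributions. -/
structure PBES (Ev A : Type) where
  bes : BES Ev A
  dists : Set (PMF Ev)

/-- Well-formedness of a probabilistic BES. -/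
def IsPBES (P : PBES Ev A) : Prop :=
  IsBES P.bes ∧ ConfusionFree P.bes ∧
  (∀ p ∈ P.dists, IsDistOn P.bes p) ∧
  (∀ e ∈ P.bes.E, ∃ p ∈ P.dists, e ∈ p.support)

/-- No bundle set contains a final event. -/
def NoFinalBundle (ℰ : BES Ev A) : Prop :=
  ∀ x e, ℰ.bundle x e → x ∩ ℰ.final = ∅

/-- Probabilistic prefix: `x ⊑ Δ` iff `Δ = Σ_{e ∈ supp p} p e · δ_{x ∪ {e}}`
for some `p` in the distribution set, with `supp p` disjoint from `x` and all
extensions configurations. -/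
def ProbPrefix (P : PBES Ev A) (x : Set Ev) (Δ : PMF (Set Ev)) : Prop :=
  IsConfig P.bes x ∧
  ∃ p ∈ P.dists, p.support ∩ x = ∅ ∧
    (∀ e ∈ p.support, IsConfig P.bes (x ∪ {e})) ∧
    Δ = p.bind (fun e => PMF.pure (x ∪ {e}))

/-- Lifting of a relation `S ⊆ X × 𝒟(Y)` to `𝒟(X) × 𝒟(Y)`. -/
def Lift {X Y : Type} (S : X → PMF Y → Prop) (Δ : PMF X) (Θ : PMF Y) : Prop :=
  ∃ (ι : Type) (_ : Countable ι) (w : PMF ι) (xs : ι → X) (Θs : ι → PMF Y),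
    Δ = w.bind (fun i => PMF.pure (xs i)) ∧
    (∀ i, w i ≠ 0 → S (xs i) (Θs i)) ∧
    Θ = w.bind Θs

/-- The labelled events of a configuration. -/
def hatSet (ℰ : BES Ev A) (x : Set Ev) : Set Ev :=
  {e | e ∈ x ∧ ℰ.lab e ≠ none}

/-- Implementation (subsumption) `x ⊑_s y` between configurations: a
label-preserving monotonic bijection from the labelled events of `y` to those
of `x`. -/
def Subsum (ℰ : BES Ev A) (x : Set Ev) (ℱ : BES Ev A) (y : Set Ev) : Prop :=
  ∃ f : Ev → Ev, Set.BijOn f (hatSet ℱ y) (hatSet ℰ x) ∧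
    (∀ e ∈ hatSet ℱ y, ℰ.lab (f e) = ℱ.lab e) ∧
    (∀ e e', e ∈ hatSet ℱ y → e' ∈ hatSet ℱ y →
      configOrder ℱ y e e' → configOrder ℰ x (f e) (f e'))

/-- Probabilistic simulation from `P` to `Q`. -/
def IsSimulation (P Q : PBES Ev A) (S : Set Ev → PMF (Set Ev) → Prop) : Prop :=
  S ∅ (PMF.pure ∅) ∧
  (∀ x Θ, S x Θ → IsConfig P.bes x ∧
    ∀ y ∈ Θ.support, IsConfig Q.bes y ∧ Subsum P.bes x Q.bes y) ∧
  (∀ x Θ Δ', S x Θ → ProbPrefix P x Δ' →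
    ∃ Θ', Relation.ReflTransGen (Lift (ProbPrefix Q)) Θ Θ' ∧ Lift S Δ' Θ') ∧
  (∀ x Θ, S x Θ → (x ∩ P.bes.final).Nonempty →
    ∀ y ∈ Θ.support, (y ∩ Q.bes.final).Nonempty)

/-- `P ⊑ Q`: there exists a probabilistic simulation from `P` to `Q`. -/
def Sim (P Q : PBES Ev A) : Prop := ∃ S, IsSimulation P Q S

/-- Nondeterministic choice of pBES. -/
def pch (P Q : PBES Ev A) : PBES Ev A :=
  ⟨bchoice P.bes Q.bes, P.dists ∪ Q.dists⟩

/-- Sequential composition of pBES. -/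
def pseq (P Q : PBES Ev A) : PBES Ev A :=
  ⟨bseq P.bes Q.bes, P.dists ∪ Q.dists⟩

/-- Concurrent composition of pBES with fresh delimiters `d₁, d₂`. -/
noncomputable def ppar (P Q : PBES Ev A) (d₁ d₂ : Ev) : PBES Ev A :=
  ⟨bpar P.bes Q.bes d₁ d₂, P.dists ∪ Q.dists ∪ {PMF.pure d₁, PMF.pure d₂}⟩

/-- The sub-pBES order. -/
def SubPBES (P Q : PBES Ev A) : Prop :=
  SubBES P.bes Q.bes ∧ P.dists = {p | p ∈ Q.dists ∧ p.support ⊆ P.bes.E}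

/-- Renaming of a pBES. -/
noncomputable def prename (g : Ev → Ev) (P : PBES Ev A) : PBES Ev A :=
  ⟨brename g P.bes, (fun p => p.map g) '' P.dists⟩

/-- `P'` is a (fresh) copy of the pBES `P`. -/
def IsPCopy (P' P : PBES Ev A) : Prop :=
  ∃ g : Ev → Ev, Set.InjOn g P.bes.E ∧ P' = prename g P

/-- Componentwise union of a chain of pBES. -/
def IsPChainUnion (c : ℕ → PBES Ev A) (P : PBES Ev A) : Prop :=
  IsChainUnion (fun i => (c i).bes) P.bes ∧ P.dists = ⋃ i, (c i).dists

/-- `S` is the binary Kleene product `P * G` of pBES. -/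
def IsPStarOf (P G S : PBES Ev A) : Prop :=
  ∃ c : ℕ → PBES Ev A,
    IsPCopy (c 0) G ∧
    (∀ i, ∃ P' G' : PBES Ev A, IsPCopy P' P ∧ IsPCopy G' G ∧
      G'.bes.E ∩ (P'.bes.E ∪ (c i).bes.E) = ∅ ∧ P'.bes.E ∩ (c i).bes.E = ∅ ∧
      c (i + 1) = pch G' (pseq P' (c i)) ∧
      SubPBES (c i) (c (i + 1))) ∧
    IsPChainUnion c S

/-!
A linearisation `β` of `x ⊆ y` extends to a linearisation of `y` by appending the events of
`y \ x` in the order of any linearisation of `y`: bundles of an appended event are met either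
in `β` or earlier among the appended events, and conflict-freeness is inherited. The causal
order `≼_y` holds in this extension, and in a repetition-free list every event ordered below
an event of the prefix `β` lies in `β` and is ordered below it there. As `β` was arbitrary,
`≼_y` below events of `x` is contained in `≼_x`.
-/

open scoped List

theorem _root_.List.pair_sublist_append_cons_iff {α : Type*} {a e : α} {l r : List α}
    (he : e ∉ r) : [a, e] <+ l ++ e :: r ↔ a ∈ l := by
  refine ⟨fun h => ?_, fun ha =>
    (List.singleton_sublist.mpr ha).append (List.singleton_sublist.mpr List.mem_cons_self)⟩
  induction l with
  | nil =>
    rcases List.sublist_cons_iff.mp h with h | ⟨_, h₁, h₂⟩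
    · exact absurd (h.subset (by simp)) he
    · cases h₁; exact absurd (h₂.subset (by simp)) he
  | cons b l ih =>
    rcases List.sublist_cons_iff.mp h with h | ⟨_, h₁, -⟩
    · exact List.mem_cons_of_mem b (ih h)
    · cases h₁; exact List.mem_cons_self

theorem _root_.List.exists_append_cons_of_pair_sublist {α : Type*} {a b : α} {l : List α}
    (h : [a, b] <+ l) : ∃ s t, l = s ++ b :: t ∧ a ∈ s := by
  obtain ⟨r₁, r₂, rfl, ha, hb⟩ := List.cons_sublist_iff.mp h
  obtain ⟨s, t, rfl⟩ := List.append_of_mem (hb.subset (List.mem_singleton_self b))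
  exact ⟨r₁ ++ s, t, by simp, List.mem_append_left s ha⟩

theorem isTrace_iff {ℰ : BES Ev A} {α : List Ev} :
    IsTrace ℰ α ↔ (∀ e ∈ α, e ∈ ℰ.E) ∧
      α.Pairwise (fun a b => b ≠ a ∧ ¬ ℰ.conflict b a) ∧
      ∀ e ∈ α, ∀ X, ℰ.bundle X e → ∃ e' ∈ X, [e', e] <+ α := by
  constructor
  · intro h
    refine ⟨fun e he => ?_, List.pairwise_iff_forall_sublist.mpr fun hab => ?_,
      fun e he X hX => ?_⟩
    · obtain ⟨l, r, hlr⟩ := List.append_of_mem he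
      exact (h l e r hlr).1
    · obtain ⟨l, r, hlr, ha⟩ := List.exists_append_cons_of_pair_sublist hab
      exact (h l _ r hlr).2.2 _ ha
    · obtain ⟨l, r, rfl⟩ := List.append_of_mem he
      obtain ⟨e', he'l, he'X⟩ := (h l e r rfl).2.1 X hX
      exact ⟨e', he'X, (List.singleton_sublist.mpr he'l).append
        (List.singleton_sublist.mpr List.mem_cons_self)⟩
  · rintro ⟨hE, hpw, hbundle⟩ l e r rfl
    have hr : e ∉ r := fun her =>
      ((List.pairwise_cons.mp (List.pairwise_append.mp hpw).2.1).1 e her).1 rfl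
    refine ⟨hE e (by simp), fun X hX => ?_, fun e' he' => ?_⟩
    · obtain ⟨e', he'X, hsub⟩ := hbundle e (by simp) X hX
      exact ⟨e', (List.pair_sublist_append_cons_iff hr).mp hsub, he'X⟩
    · exact List.pairwise_iff_forall_sublist.mp hpw
        ((List.pair_sublist_append_cons_iff hr).mpr he')

namespace IsTrace

variable {ℰ : BES Ev A} {α β : List Ev}

theorem nodup (h : IsTrace ℰ α) : α.Nodup :=
  (isTrace_iff.mp h).2.1.imp fun hab => hab.1.symm

theorem not_conflict (hwf : IsBES ℰ) (h : IsTrace ℰ α) {a b : Ev} (ha : a ∈ α)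
    (hb : b ∈ α) : ¬ ℰ.conflict a b := by
  obtain rfl | hne := eq_or_ne a b
  · exact hwf.1 a
  have hpw : α.Pairwise (fun a b => ¬ ℰ.conflict a b ∧ ¬ ℰ.conflict b a) :=
    (isTrace_iff.mp h).2.1.imp fun hab => ⟨fun hc => hab.2 (hwf.2.1 _ _ hc), hab.2⟩
  have : Std.Symm (fun a b => ¬ ℰ.conflict a b ∧ ¬ ℰ.conflict b a) := ⟨fun _ _ h => h.symm⟩
  exact (hpw.forall ha hb hne).1

theorem append_filter_not_mem (hwf : IsBES ℰ) (hβ : IsTrace ℰ β) (hα : IsTrace ℰ α)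
    (hβα : β ⊆ α) : IsTrace ℰ (β ++ α.filter (· ∉ β)) := by
  obtain ⟨hβE, hβpw, hβbundle⟩ := isTrace_iff.mp hβ
  obtain ⟨hαE, hαpw, hαbundle⟩ := isTrace_iff.mp hα
  have mem_filter : ∀ {e}, e ∈ α.filter (· ∉ β) ↔ e ∈ α ∧ e ∉ β := by simp
  refine isTrace_iff.mpr ⟨fun e he => ?_, List.pairwise_append.mpr ⟨hβpw, hαpw.filter _,
    fun a ha b hb => ?_⟩, fun e he X hX => ?_⟩
  · rcases List.mem_append.mp he with he | he
    exacts [hβE e he, hαE e (mem_filter.mp he).1]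
  · obtain ⟨hbα, hbβ⟩ := mem_filter.mp hb
    exact ⟨fun h => hbβ (h ▸ ha), hα.not_conflict hwf hbα (hβα ha)⟩
  · rcases List.mem_append.mp he with he | he
    · obtain ⟨e', he'X, hsub⟩ := hβbundle e he X hX
      exact ⟨e', he'X, hsub.trans (List.sublist_append_left β _)⟩
    obtain ⟨heα, heβ⟩ := mem_filter.mp he
    obtain ⟨e', he'X, hsub⟩ := hαbundle e heα X hX
    refine ⟨e', he'X, ?_⟩
    by_cases he'β : e' ∈ β
    · exact (List.singleton_sublist.mpr he'β).append (List.singleton_sublist.mpr he)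
    · have := hsub.filter (fun e => decide (e ∉ β))
      simp only [List.filter_cons, he'β, heβ, List.filter_nil] at this
      exact this.trans (List.sublist_append_right β _)

end IsTrace

theorem traceAdj.mem_left {α : List Ev} {a b : Ev} (h : traceAdj α a b) : a ∈ α := by
  obtain ⟨l, r, rfl⟩ := h
  simp

theorem traceOrder.mem_of_mem_right {α : List Ev} {a b : Ev} (h : traceOrder α a b)
    (hb : b ∈ α) : a ∈ α := by
  rcases Relation.ReflTransGen.cases_head h with rfl | ⟨c, hac, -⟩
  exacts [hb, hac.mem_left]

theorem traceAdj.of_append {β δ : List Ev} {a b : Ev} (hnd : (β ++ δ).Nodup) (hb : b ∈ β)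
    (h : traceAdj (β ++ δ) a b) : traceAdj β a b := by
  obtain ⟨l, r, hlr⟩ := h
  have hbδ : b ∉ δ := fun hbδ => List.disjoint_of_nodup_append hnd hb hbδ
  rcases List.append_eq_append_iff.mp hlr.symm with ⟨s, rfl, hs⟩ | ⟨s, -, rfl⟩
  · rcases List.cons_eq_append_iff.mp hs with ⟨-, rfl⟩ | ⟨s', rfl, hs'⟩
    · simp at hbδ
    rcases List.cons_eq_append_iff.mp hs' with ⟨-, rfl⟩ | ⟨t, rfl, -⟩
    · simp at hbδ
    exact ⟨l, t, by simp⟩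
  · simp at hbδ

theorem traceOrder.of_append {β δ : List Ev} {a b : Ev} (hnd : (β ++ δ).Nodup)
    (hb : b ∈ β) (h : traceOrder (β ++ δ) a b) : traceOrder β a b := by
  induction h with
  | refl => exact Relation.ReflTransGen.refl
  | tail _ hcb ih =>
    have hcb' := hcb.of_append hnd hb
    exact (ih hcb'.mem_left).tail hcb'

theorem mem_of_configOrder {ℰ : BES Ev A} {x : Set Ev} {a b : Ev} (hx : IsConfig ℰ x)
    (h : configOrder ℰ x a b) (hb : b ∈ x) : a ∈ x := by
  obtain ⟨β, hβ, rfl⟩ := hx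
  exact (h β hβ rfl).mem_of_mem_right hb

theorem configOrder_of_subset {ℰ : BES Ev A} (hwf : IsBES ℰ) {x y : Set Ev}
    (hy : IsConfig ℰ y) (hxy : x ⊆ y) {a b : Ev} (hb : b ∈ x) (h : configOrder ℰ y a b) :
    configOrder ℰ x a b := by
  rintro β hβ rfl
  obtain ⟨α, hα, rfl⟩ := hy
  have hβα : β ⊆ α := fun e he => hxy he
  have hγ := hβ.append_filter_not_mem hwf hα hβα
  have hγα : {e | e ∈ β ++ α.filter (· ∉ β)} = {e | e ∈ α} := by
    ext e
    by_cases he : e ∈ β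
    · simp [he, hβα he]
    · simp [he]
  exact (h _ hγ hγα).of_append hγ.nodup hb

/-- Proposition 1: if `x ⊆ y` are configurations of a BES `ℰ`, then the lposet
of `x` is a prefix of the lposet of `y`. -/
theorem configuration_prefix {Ev A : Type} (ℰ : BES Ev A) (hwf : IsBES ℰ)
    (x y : Set Ev) (hx : IsConfig ℰ x) (hy : IsConfig ℰ y) (hxy : x ⊆ y) :
    LposetPrefix x (fun a b => a ∈ x ∧ b ∈ x ∧ configOrder ℰ x a b) (labOn ℰ x)
      y (fun a b => a ∈ y ∧ b ∈ y ∧ configOrder ℰ y a b) (labOn ℰ y) := by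
  refine ⟨hxy, fun e he => by simp [labOn, he, hxy he], ?_⟩
  rintro a b ⟨-, -, hab⟩ hb
  have hab' := configOrder_of_subset hwf hy hxy hb hab
  have ha := mem_of_configOrder hx hab' hb
  exact ⟨ha, ha, hb, hab'⟩

end PCKA
end

section
/- Let ℰ be a bundle event structure, α an event trace of ℰ, and x a configuration of ℰ whose events are all among the events occurring in α. Then the restriction α|_x of α (the subsequence of α consisting of the events belonging to x) is again an event trace of ℰ. -/
open Classical

namespace PCKA

variable {Ev A : Type}

/-! The restriction keeps the relative order of the events of `α`, so distinctness and
conflict-freeness with earlier events are inherited. For a bundle `X ↦ e` with `e ∈ x`,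
a linearisation of `x` provides some `e' ∈ X ∩ x`, while `α` provides an earlier `w ∈ X`.
Members of a bundle are pairwise in conflict and events of a trace are not, so
`w = e' ∈ x`, and `w` survives the restriction. -/

theorem _root_.List.exists_eq_append_cons_of_filter_eq {α : Type*} {p : α → Bool}
    {l L₁ L₂ : List α} {a : α} (h : l.filter p = L₁ ++ a :: L₂) :
    ∃ l₁ l₂, l = l₁ ++ a :: l₂ ∧ l₁.filter p = L₁ ∧ p a ∧ l₂.filter p = L₂ := by
  obtain ⟨m₁, m₂, rfl, hm₁, hm₂⟩ := List.filter_eq_append_iff.1 h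
  obtain ⟨k₁, k₂, rfl, hk₁, hpa, hk₂⟩ := List.filter_eq_cons_iff.1 hm₂
  refine ⟨m₁ ++ k₁, k₂, by simp, ?_, hpa, hk₂⟩
  rw [List.filter_append, hm₁, List.filter_eq_nil_iff.2 hk₁, List.append_nil]

section

variable {ℰ : BES Ev A} {α : List Ev} {a b e : Ev} {X x : Set Ev}

theorem IsTrace.not_conflict_s1 (hwf : IsBES ℰ) (hα : IsTrace ℰ α) (ha : a ∈ α) (hb : b ∈ α) :
    ¬ ℰ.conflict a b := by
  obtain ⟨s, t, rfl⟩ := List.append_of_mem ha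
  rcases List.mem_append.1 hb with hbs | hbt
  · exact ((hα s a t rfl).2.2 b hbs).2
  rcases List.mem_cons.1 hbt with rfl | hbt
  · exact hwf.1 b
  · obtain ⟨s', t', rfl⟩ := List.append_of_mem hbt
    have hba := ((hα (s ++ a :: s') b t' (by simp)).2.2 a (by simp)).2
    exact fun hab => hba (hwf.2.1 a b hab)

theorem IsTrace.eq_of_mem_bundle (hwf : IsBES ℰ) (hα : IsTrace ℰ α) (hX : ℰ.bundle X e)
    (ha : a ∈ α) (hb : b ∈ α) (haX : a ∈ X) (hbX : b ∈ X) : a = b := by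
  by_contra hne
  exact hα.not_conflict_s1 hwf ha hb ((hwf.2.2.2.1 X e hX).2.2 a haX b hbX hne)

theorem IsConfig.exists_mem_of_bundle (hx : IsConfig ℰ x) (he : e ∈ x) (hX : ℰ.bundle X e) :
    ∃ e' ∈ x, e' ∈ X := by
  obtain ⟨β, hβ, rfl⟩ := hx
  obtain ⟨s, t, rfl⟩ := List.append_of_mem he
  obtain ⟨e', hs, he'X⟩ := (hβ s e t rfl).2.1 X hX
  exact ⟨e', by simp [hs], he'X⟩

end

/-- Lemma: the restriction of an event trace to (the events of) a configuration
contained in the trace's events is again an event trace. -/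
theorem trace_restriction {Ev A : Type} (ℰ : BES Ev A) (hwf : IsBES ℰ)
    (α : List Ev) (x : Set Ev) (hα : IsTrace ℰ α) (hx : IsConfig ℰ x)
    (hsub : x ⊆ {e | e ∈ α}) :
    IsTrace ℰ (listRestrict α x) := by
  intro l' e r' hsplit
  obtain ⟨l, r, rfl, rfl, hex, -⟩ := List.exists_eq_append_cons_of_filter_eq hsplit
  obtain ⟨hE, hbundle, hprev⟩ := hα l e r rfl
  refine ⟨hE, fun X hX => ?_, fun e' he' => hprev e' (List.mem_of_mem_filter he')⟩
  obtain ⟨w, hwl, hwX⟩ := hbundle X hX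
  obtain ⟨e', he'x, he'X⟩ := hx.exists_mem_of_bundle (of_decide_eq_true hex) hX
  have hwe' : w = e' := hα.eq_of_mem_bundle hwf hX (by simp [hwl]) (hsub he'x) hwX he'X
  exact ⟨w, List.mem_filter.2 ⟨hwl, decide_eq_true (hwe' ▸ he'x)⟩, hwX⟩

end PCKA
end

section
/- Let ℰ be a bundle event structure and let x, y be configurations of ℰ with x ⊆ y. Then for every event trace α whose set of events is exactly x, there exists an event trace α' whose set of events is exactly y such that the restriction of α' to the events of x equals α. -/
open Classical

namespace PCKA

variable {Ev A : Type}

/-! Given a linearisation `β` of `y`, append to `α` the events of `β` outside `x`, in their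
order in `β`. Each appended event has its bundles met earlier in `β`, hence in `α` or earlier
in the appended part, and it is conflict-free with the events of `α` because all of them lie
in the single trace `β`. -/

def EnabledAfter (ℰ : BES Ev A) (l : List Ev) (e : Ev) : Prop :=
  e ∈ ℰ.E ∧ (∀ x, ℰ.bundle x e → ∃ e' ∈ l, e' ∈ x) ∧
    ∀ e' ∈ l, e ≠ e' ∧ ¬ ℰ.conflict e e'

theorem _root_.List.exists_of_filter_eq_append_cons {α : Type*} {p : α → Bool}
    {β l r : List α} {e : α} (h : β.filter p = l ++ e :: r) :
    ∃ β₁ β₂, β = β₁ ++ e :: β₂ ∧ β₁.filter p = l ∧ p e := by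
  obtain ⟨β₁, β₂, rfl, hβ₁, hβ₂⟩ := List.filter_eq_append_iff.mp h
  obtain ⟨γ₁, γ₂, rfl, hγ₁, hpe, -⟩ := List.filter_eq_cons_iff.mp hβ₂
  refine ⟨β₁ ++ γ₁, γ₂, by simp, ?_, hpe⟩
  rw [List.filter_append, hβ₁, List.filter_eq_nil_iff.mpr hγ₁, List.append_nil]

theorem mem_listRestrict {α : List Ev} {x : Set Ev} {e : Ev} :
    e ∈ listRestrict α x ↔ e ∈ α ∧ e ∈ x := by
  simp [listRestrict]

theorem isTrace_append {ℰ : BES Ev A} {α γ : List Ev} (hα : IsTrace ℰ α)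
    (hγ : ∀ l e r, γ = l ++ e :: r → EnabledAfter ℰ (α ++ l) e) :
    IsTrace ℰ (α ++ γ) := by
  intro l e r h
  rcases List.append_eq_append_iff.mp h with ⟨l', rfl, hγ'⟩ | ⟨_ | ⟨e₀, l'⟩, hα', he⟩
  · exact hγ l' e r hγ'
  · simp only [List.nil_append, List.append_nil] at hα' he
    subst hα'
    exact (List.append_nil α).symm ▸ hγ [] e r he.symm
  · obtain ⟨rfl, -⟩ := List.cons_eq_cons.mp he
    exact hα l e l' hα'

theorem IsTrace.not_conflict_s2 {ℰ : BES Ev A}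
    (hsymm : ∀ a b, ℰ.conflict a b → ℰ.conflict b a) {β : List Ev} (hβ : IsTrace ℰ β)
    {a b : Ev} (ha : a ∈ β) (hb : b ∈ β) (hab : a ≠ b) : ¬ ℰ.conflict a b := by
  obtain ⟨l, r, rfl⟩ := List.append_of_mem ha
  rcases List.mem_append.mp hb with hbl | hbr
  · exact ((hβ l a r rfl).2.2 b hbl).2
  · obtain ⟨δ₁, δ₂, rfl⟩ := List.append_of_mem ((List.mem_cons.mp hbr).resolve_left hab.symm)
    intro hc
    exact ((hβ (l ++ a :: δ₁) b δ₂ (by simp)).2.2 a (by simp)).2 (hsymm a b hc)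

theorem IsTrace.append_listRestrict_compl {ℰ : BES Ev A}
    (hsymm : ∀ a b, ℰ.conflict a b → ℰ.conflict b a) {α β : List Ev}
    (hα : IsTrace ℰ α) (hβ : IsTrace ℰ β) (hαβ : ∀ e ∈ α, e ∈ β) :
    IsTrace ℰ (α ++ listRestrict β {e | e ∈ α}ᶜ) := by
  refine isTrace_append hα fun l e r h => ?_
  obtain ⟨β₁, β₂, rfl, rfl, hpe⟩ := List.exists_of_filter_eq_append_cons h
  have heα : e ∉ α := by simpa using hpe
  obtain ⟨heE, hbundle, hprefix⟩ := hβ β₁ e β₂ rfl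
  refine ⟨heE, fun z hz => ?_, fun e' he' => ?_⟩
  · obtain ⟨e', he'β₁, he'z⟩ := hbundle z hz
    by_cases he'α : e' ∈ α
    · exact ⟨e', List.mem_append_left _ he'α, he'z⟩
    · exact ⟨e', List.mem_append_right _ (mem_listRestrict.mpr ⟨he'β₁, he'α⟩), he'z⟩
  · rcases List.mem_append.mp he' with he'α | he'β₁
    · have hne : e ≠ e' := fun h => heα (h ▸ he'α)
      exact ⟨hne, hβ.not_conflict_s2 hsymm (by simp) (by simpa using hαβ e' he'α) hne⟩
    · exact hprefix e' (mem_listRestrict.mp he'β₁).1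

theorem listRestrict_append_listRestrict_compl (α β : List Ev) :
    listRestrict (α ++ listRestrict β {e | e ∈ α}ᶜ) {e | e ∈ α} = α := by
  simp only [listRestrict, List.filter_append, List.filter_filter]
  rw [List.filter_eq_self.mpr (by simp), List.filter_eq_nil_iff.mpr (by simp), List.append_nil]

theorem trace_extension_general {Ev A : Type} (ℰ : BES Ev A) (hwf : IsBES ℰ)
    (x y : Set Ev) (hy : IsConfig ℰ y) (hxy : x ⊆ y)
    (α : List Ev) (hα : IsTrace ℰ α) (hαx : {e | e ∈ α} = x) :
    ∃ α' : List Ev, IsTrace ℰ α' ∧ {e | e ∈ α'} = y ∧ listRestrict α' x = α := by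
  obtain ⟨β, hβ, rfl⟩ := hy
  subst hαx
  refine ⟨α ++ listRestrict β {e | e ∈ α}ᶜ, hα.append_listRestrict_compl hwf.2.1 hβ hxy,
    ?_, listRestrict_append_listRestrict_compl α β⟩
  ext e
  by_cases he : e ∈ α
  · simp [mem_listRestrict, he, hxy he]
  · simp [mem_listRestrict, he]

/-- Lemma: any linearisation of a configuration `x` extends to a linearisation
of any configuration `y ⊇ x`, whose restriction to `x` is the original trace. -/
theorem trace_extension {Ev A : Type} (ℰ : BES Ev A) (hwf : IsBES ℰ)
    (x y : Set Ev) (hx : IsConfig ℰ x) (hy : IsConfig ℰ y) (hxy : x ⊆ y)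
    (α : List Ev) (hα : IsTrace ℰ α) (hαx : {e | e ∈ α} = x) :
    ∃ α' : List Ev, IsTrace ℰ α' ∧ {e | e ∈ α'} = y ∧ listRestrict α' x = α :=
  trace_extension_general ℰ hwf x y hy hxy α hα hαx

end PCKA
end

section
/- The sub-BES relation ⊑ is a partial order on bundle event structures (reflexive, antisymmetric and transitive), and it is ω-complete: every countable ascending chain ℰ₀ ⊑ ℰ₁ ⊑ ℰ₂ ⊑ ⋯ has a least upper bound with respect to ⊑, namely the componentwise union ℰ = (∪ᵢ Eᵢ, ∪ᵢ #ᵢ, ∪ᵢ ↦ᵢ, ∪ᵢ λᵢ, ∪ᵢ Φᵢ), which is itself a BES. -/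
open Classical

namespace PCKA

variable {Ev A : Type}

theorem IsBES.lab_eq_none {ℰ : BES Ev A} (h : IsBES ℰ) {e : Ev} (he : e ∉ ℰ.E) :
    ℰ.lab e = none := by
  by_contra hl
  exact he (h.2.2.2.2.1 e hl)

namespace SubBES

variable {ℰ ℱ 𝒢 : BES Ev A} {e e' : Ev} {x : Set Ev}

theorem conflict (h : SubBES ℰ ℱ) (hc : ℰ.conflict e e') : ℱ.conflict e e' :=
  ((h.2.1 e e').1 hc).1

theorem conflict_of_mem (h : SubBES ℰ ℱ) (hc : ℱ.conflict e e') (he : e ∈ ℰ.E)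
    (he' : e' ∈ ℰ.E) : ℰ.conflict e e' :=
  (h.2.1 e e').2 ⟨hc, he, he'⟩

theorem bundle (h : SubBES ℰ ℱ) (hb : ℰ.bundle x e) : ℱ.bundle x e :=
  h.2.2.1 x e hb

theorem bundle_of_mem (h : SubBES ℰ ℱ) (hb : ℱ.bundle x e) (he : e ∈ ℰ.E) :
    x ⊆ ℰ.E ∧ ℰ.bundle x e :=
  h.2.2.2.1 x e hb he

theorem lab_eq (h : SubBES ℰ ℱ) (he : e ∈ ℰ.E) : ℰ.lab e = ℱ.lab e :=
  h.2.2.2.2.1 e he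

theorem mem_of_conflict (h : SubBES ℰ ℱ) (hc : ℰ.conflict e e') : e ∈ ℰ.E ∧ e' ∈ ℰ.E :=
  ((h.2.1 e e').1 hc).2

theorem mem_of_final (h : SubBES ℰ ℱ) (hf : e ∈ ℰ.final) : e ∈ ℰ.E :=
  ((h.2.2.2.2.2 e).1 hf).2

theorem final (h : SubBES ℰ ℱ) (hf : e ∈ ℰ.final) : e ∈ ℱ.final :=
  ((h.2.2.2.2.2 e).1 hf).1

theorem final_of_mem (h : SubBES ℰ ℱ) (hf : e ∈ ℱ.final) (he : e ∈ ℰ.E) : e ∈ ℰ.final :=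
  (h.2.2.2.2.2 e).2 ⟨hf, he⟩

theorem refl (h : IsBES ℰ) : SubBES ℰ ℰ := by
  obtain ⟨-, -, hmem, hbundle, -, hfinal, -⟩ := h
  refine ⟨subset_rfl, fun e e' => ⟨fun hc => ⟨hc, hmem e e' hc⟩, And.left⟩,
    fun _ _ hb => hb, fun x e hb _ => ⟨(hbundle x e hb).2.1, hb⟩, fun _ _ => rfl,
    fun e => ⟨fun hf => ⟨hf, hfinal hf⟩, And.left⟩⟩

theorem trans (h₁ : SubBES ℰ ℱ) (h₂ : SubBES ℱ 𝒢) : SubBES ℰ 𝒢 := by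
  refine ⟨h₁.1.trans h₂.1, fun e e' => ⟨fun hc => ?_, fun ⟨hc, he, he'⟩ => ?_⟩,
    fun _ _ hb => h₂.bundle (h₁.bundle hb),
    fun _ _ hb he => h₁.bundle_of_mem (h₂.bundle_of_mem hb (h₁.1 he)).2 he,
    fun _ he => (h₁.lab_eq he).trans (h₂.lab_eq (h₁.1 he)),
    fun e => ⟨fun hf => ⟨h₂.final (h₁.final hf), ?_⟩, fun ⟨hf, he⟩ => ?_⟩⟩
  · exact ⟨h₂.conflict (h₁.conflict hc), h₁.mem_of_conflict hc⟩
  · exact h₁.conflict_of_mem (h₂.conflict_of_mem hc (h₁.1 he) (h₁.1 he')) he he'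
  · exact h₁.mem_of_final hf
  · exact h₁.final_of_mem (h₂.final_of_mem hf (h₁.1 he)) he

theorem antisymm (hℰ : IsBES ℰ) (hℱ : IsBES ℱ) (h₁ : SubBES ℰ ℱ) (h₂ : SubBES ℱ ℰ) :
    ℰ = ℱ := by
  obtain ⟨E, conflict, bundle, lab, final⟩ := ℰ
  obtain ⟨E', conflict', bundle', lab', final'⟩ := ℱ
  obtain rfl : E = E' := h₁.1.antisymm h₂.1
  congr 1
  · funext e e'
    exact propext ⟨h₁.conflict, h₂.conflict⟩
  · funext x e
    exact propext ⟨h₁.bundle, h₂.bundle⟩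
  · funext e
    by_cases he : e ∈ E
    · exact h₁.lab_eq he
    · exact (hℰ.lab_eq_none he).trans (hℱ.lab_eq_none he).symm
  · ext e
    exact ⟨h₁.final, h₂.final⟩

end SubBES

theorem subBES_of_le_of_forall_subBES_succ {c : ℕ → BES Ev A} (hwf : ∀ i, IsBES (c i))
    (hs : ∀ i, SubBES (c i) (c (i + 1))) {i j : ℕ} (hij : i ≤ j) : SubBES (c i) (c j) := by
  induction j, hij using Nat.le_induction with
  | base => exact SubBES.refl (hwf i)
  | succ n _ ih => exact ih.trans (hs n)

/-- The label of `e` is read off an arbitrarily chosen stage containing `e`; along a chain all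
such stages agree (`chainUnion_lab`). -/
noncomputable def chainUnion (c : ℕ → BES Ev A) : BES Ev A where
  E := ⋃ i, (c i).E
  conflict e e' := ∃ i, (c i).conflict e e'
  bundle x e := ∃ i, (c i).bundle x e
  lab e := if h : ∃ i, e ∈ (c i).E then (c h.choose).lab e else none
  final := ⋃ i, (c i).final

theorem chainUnion_lab_eq_none {c : ℕ → BES Ev A} {e : Ev} (he : e ∉ (chainUnion c).E) :
    (chainUnion c).lab e = none :=
  dif_neg fun ⟨j, hj⟩ => he (Set.mem_iUnion_of_mem j hj)

section ChainUnion

variable {c : ℕ → BES Ev A} (hc : ∀ i j, i ≤ j → SubBES (c i) (c j))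
include hc

theorem chainUnion_lab {i : ℕ} {e : Ev} (he : e ∈ (c i).E) :
    (chainUnion c).lab e = (c i).lab e := by
  have h : ∃ j, e ∈ (c j).E := ⟨i, he⟩
  simp only [chainUnion, dif_pos h]
  rcases le_total h.choose i with hji | hij
  · exact (hc _ _ hji).lab_eq h.choose_spec
  · exact ((hc _ _ hij).lab_eq he).symm

theorem isChainUnion_chainUnion : IsChainUnion c (chainUnion c) :=
  ⟨rfl, fun _ _ => Iff.rfl, fun _ _ => Iff.rfl, fun _ _ he => chainUnion_lab hc he,
    fun _ => chainUnion_lab_eq_none, rfl⟩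

theorem isBES_chainUnion (hwf : ∀ i, IsBES (c i)) : IsBES (chainUnion c) := by
  refine ⟨fun e ⟨i, hce⟩ => (hwf i).1 e hce, fun e e' ⟨i, hce⟩ => ⟨i, (hwf i).2.1 e e' hce⟩,
    fun e e' ⟨i, hce⟩ => ?_, fun x e ⟨i, hb⟩ => ?_, fun e hl => ?_,
    Set.iUnion_mono fun i _ => (hc i i le_rfl).mem_of_final, ?_⟩
  · obtain ⟨he, he'⟩ := (hc i i le_rfl).mem_of_conflict hce
    exact ⟨Set.mem_iUnion_of_mem i he, Set.mem_iUnion_of_mem i he'⟩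
  · obtain ⟨he, hx, hpair⟩ := (hwf i).2.2.2.1 x e hb
    exact ⟨Set.mem_iUnion_of_mem i he, fun a ha => Set.mem_iUnion_of_mem i (hx ha),
      fun a ha b hb hab => ⟨i, hpair a ha b hb hab⟩⟩
  · by_contra he
    exact hl (chainUnion_lab_eq_none he)
  · simp only [chainUnion, Set.mem_iUnion]
    rintro a ⟨i, ha⟩ b ⟨j, hb⟩ hab
    exact ⟨max i j, (hwf _).2.2.2.2.2.2 a ((hc i _ (le_max_left i j)).final ha)
      b ((hc j _ (le_max_right i j)).final hb) hab⟩

theorem subBES_chainUnion (i : ℕ) : SubBES (c i) (chainUnion c) := by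
  have hi := hc i i le_rfl
  refine ⟨Set.subset_iUnion (fun j => (c j).E) i, fun e e' => ⟨fun hce => ?_, ?_⟩,
    fun _ _ hb => ⟨i, hb⟩, ?_, fun _ he => (chainUnion_lab hc he).symm,
    fun e => ⟨fun hf => ⟨Set.mem_iUnion_of_mem i hf, ?_⟩, ?_⟩⟩
  · exact ⟨⟨i, hce⟩, hi.mem_of_conflict hce⟩
  · rintro ⟨⟨j, hce⟩, he, he'⟩
    exact (hc i _ (le_max_left i j)).conflict_of_mem
      ((hc j _ (le_max_right i j)).conflict hce) he he'
  · rintro x e ⟨j, hb⟩ he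
    exact (hc i _ (le_max_left i j)).bundle_of_mem ((hc j _ (le_max_right i j)).bundle hb) he
  · exact hi.mem_of_final hf
  · rintro ⟨hf, he⟩
    obtain ⟨j, hj⟩ := Set.mem_iUnion.1 hf
    exact (hc i _ (le_max_left i j)).final_of_mem ((hc j _ (le_max_right i j)).final hj) he

theorem chainUnion_subBES {ℱ : BES Ev A} (hub : ∀ i, SubBES (c i) ℱ) :
    SubBES (chainUnion c) ℱ := by
  refine ⟨Set.iUnion_subset fun i => (hub i).1, fun e e' => ⟨?_, ?_⟩,
    fun x e ⟨i, hb⟩ => (hub i).bundle hb, fun x e hb he => ?_, fun e he => ?_,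
    fun e => ⟨?_, ?_⟩⟩
  · rintro ⟨i, hce⟩
    obtain ⟨he, he'⟩ := (hub i).mem_of_conflict hce
    exact ⟨(hub i).conflict hce, Set.mem_iUnion_of_mem i he, Set.mem_iUnion_of_mem i he'⟩
  · rintro ⟨hce, he, he'⟩
    obtain ⟨i, hi⟩ := Set.mem_iUnion.1 he
    obtain ⟨j, hj⟩ := Set.mem_iUnion.1 he'
    exact ⟨max i j, (hub _).conflict_of_mem hce ((hc i _ (le_max_left i j)).1 hi)
      ((hc j _ (le_max_right i j)).1 hj)⟩
  · obtain ⟨i, hi⟩ := Set.mem_iUnion.1 he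
    obtain ⟨hx, hb⟩ := (hub i).bundle_of_mem hb hi
    exact ⟨hx.trans (Set.subset_iUnion (fun j => (c j).E) i), i, hb⟩
  · obtain ⟨i, hi⟩ := Set.mem_iUnion.1 he
    rw [chainUnion_lab hc hi, (hub i).lab_eq hi]
  · rintro hf
    obtain ⟨i, hi⟩ := Set.mem_iUnion.1 hf
    exact ⟨(hub i).final hi, Set.mem_iUnion_of_mem i ((hub i).mem_of_final hi)⟩
  · rintro ⟨hf, he⟩
    obtain ⟨i, hi⟩ := Set.mem_iUnion.1 he
    exact Set.mem_iUnion_of_mem i ((hub i).final_of_mem hf hi)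

end ChainUnion

/-- Proposition 2: the sub-BES relation is a partial order which is
ω-complete: every countable ascending chain has a least upper bound, namely
the componentwise union, which is itself a BES. -/
theorem subBES_omega_complete {Ev A : Type} :
    (∀ ℰ : BES Ev A, IsBES ℰ → SubBES ℰ ℰ) ∧
    (∀ ℰ ℱ : BES Ev A, IsBES ℰ → IsBES ℱ → SubBES ℰ ℱ → SubBES ℱ ℰ → ℰ = ℱ) ∧
    (∀ ℰ ℱ 𝒢 : BES Ev A, IsBES ℰ → IsBES ℱ → IsBES 𝒢 →
      SubBES ℰ ℱ → SubBES ℱ 𝒢 → SubBES ℰ 𝒢) ∧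
    (∀ c : ℕ → BES Ev A, (∀ i, IsBES (c i)) → (∀ i, SubBES (c i) (c (i + 1))) →
      ∃ 𝒮 : BES Ev A, IsBES 𝒮 ∧ IsChainUnion c 𝒮 ∧
        (∀ i, SubBES (c i) 𝒮) ∧
        (∀ ℱ : BES Ev A, IsBES ℱ → (∀ i, SubBES (c i) ℱ) → SubBES 𝒮 ℱ)) := by
  refine ⟨fun _ => SubBES.refl, fun _ _ => SubBES.antisymm,
    fun _ _ _ _ _ _ => SubBES.trans, fun c hwf hs => ?_⟩
  have hc : ∀ i j, i ≤ j → SubBES (c i) (c j) := fun _ _ =>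
    subBES_of_le_of_forall_subBES_succ hwf hs
  exact ⟨chainUnion c, isBES_chainUnion hc hwf, isChainUnion_chainUnion hc,
    subBES_chainUnion hc, fun _ _ => chainUnion_subBES hc⟩

end PCKA
end

section
/- Let ℰ and ℰ' be bundle event structures with ℰ ⊑ ℰ' (sub-BES). Then the event traces of ℰ are exactly the event traces of ℰ' all of whose events belong to E, i.e. T(ℰ) = {α ∈ T(ℰ') | every event of α lies in E}. -/
open Classical

namespace PCKA

variable {Ev A : Type}

theorem IsTrace.mem_E {ℰ : BES Ev A} {α : List Ev} (hα : IsTrace ℰ α) {e : Ev}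
    (he : e ∈ α) : e ∈ ℰ.E := by
  obtain ⟨l, r, rfl⟩ := List.append_of_mem he
  exact (hα l e r rfl).1

theorem SubBES.isTrace {ℰ ℱ : BES Ev A} (h : SubBES ℰ ℱ) {α : List Ev}
    (hα : IsTrace ℰ α) : IsTrace ℱ α := by
  obtain ⟨hE, hconflict, -, hbundle, -, -⟩ := h
  intro l e r hlr
  obtain ⟨he, henabled, hfree⟩ := hα l e r hlr
  refine ⟨hE he, fun x hx => henabled x (hbundle x e hx he).2, fun e' he' => ?_⟩
  have he'E : e' ∈ ℰ.E := hα.mem_E (by simp [hlr, he'])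
  exact ⟨(hfree e' he').1, fun hc => (hfree e' he').2 ((hconflict e e').2 ⟨hc, he, he'E⟩)⟩

theorem SubBES.isTrace_of_forall_mem {ℰ ℱ : BES Ev A} (h : SubBES ℰ ℱ) {α : List Ev}
    (hα : IsTrace ℱ α) (hmem : ∀ e ∈ α, e ∈ ℰ.E) : IsTrace ℰ α := by
  obtain ⟨-, hconflict, hbundle, -, -, -⟩ := h
  intro l e r hlr
  obtain ⟨-, henabled, hfree⟩ := hα l e r hlr
  refine ⟨hmem e (by simp [hlr]), fun x hx => henabled x (hbundle x e hx), fun e' he' => ?_⟩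
  exact ⟨(hfree e' he').1, fun hc => (hfree e' he').2 ((hconflict e e').1 hc).1⟩

theorem subBES_traces_general {Ev A : Type} (ℰ ℰ' : BES Ev A) (h : SubBES ℰ ℰ') :
    ∀ α : List Ev, IsTrace ℰ α ↔ (IsTrace ℰ' α ∧ ∀ e ∈ α, e ∈ ℰ.E) := fun _ =>
  ⟨fun hα => ⟨h.isTrace hα, fun _ => hα.mem_E⟩,
    fun ⟨hα, hmem⟩ => h.isTrace_of_forall_mem hα hmem⟩

/-- Proposition: if `ℰ ⊑ ℰ'` (sub-BES) then the event traces of `ℰ` are exactly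
those event traces of `ℰ'` all of whose events lie in `E`. -/
theorem subBES_traces {Ev A : Type} (ℰ ℰ' : BES Ev A)
    (hE : IsBES ℰ) (hE' : IsBES ℰ') (h : SubBES ℰ ℰ') :
    ∀ α : List Ev, IsTrace ℰ α ↔ (IsTrace ℰ' α ∧ ∀ e ∈ α, e ∈ ℰ.E) :=
  subBES_traces_general ℰ ℰ' h

end PCKA
end

section
/- Let ℰ and ℰ' be bundle event structures with ℰ ⊑ ℰ' (sub-BES). Then C(ℰ) ⊆ C(ℰ'), and moreover every lposet of ℰ is an lposet of ℰ': for every configuration x of ℰ, x is a configuration of ℰ' and the order ≼_x computed in ℰ coincides with the order ≼_x computed in ℰ' (and the labellings agree), so L(ℰ) ⊆ L(ℰ'). -/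
open Classical

namespace PCKA

variable {Ev A : Type}

theorem IsConfig.subset_E {ℰ : BES Ev A} {x : Set Ev} (hx : IsConfig ℰ x) : x ⊆ ℰ.E := by
  obtain ⟨α, hα, rfl⟩ := hx
  exact fun _ he => hα.mem_E he

namespace SubBES

variable {ℰ ℱ : BES Ev A} {α : List Ev} {x : Set Ev}

theorem isTrace_s5 (h : SubBES ℰ ℱ) (hα : IsTrace ℰ α) : IsTrace ℱ α := by
  obtain ⟨hEF, hconf, -, hbundle, -⟩ := h
  intro l e r hlr
  obtain ⟨he, henabled, hfree⟩ := hα l e r hlr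
  refine ⟨hEF he, fun y hy => henabled y (hbundle y e hy he).2, fun e' he' => ?_⟩
  have he'E : e' ∈ ℰ.E := hα.mem_E (by simp [hlr, he'])
  exact ⟨(hfree e' he').1, fun hc => (hfree e' he').2 ((hconf e e').2 ⟨hc, he, he'E⟩)⟩

theorem isTrace_of_forall_mem_s5 (h : SubBES ℰ ℱ) (hαE : ∀ e ∈ α, e ∈ ℰ.E)
    (hα : IsTrace ℱ α) : IsTrace ℰ α := by
  obtain ⟨-, hconf, hbundle, -⟩ := h
  intro l e r hlr
  obtain ⟨-, henabled, hfree⟩ := hα l e r hlr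
  refine ⟨hαE e (by simp [hlr]), fun y hy => henabled y (hbundle y e hy), fun e' he' => ?_⟩
  exact ⟨(hfree e' he').1, fun hc => (hfree e' he').2 ((hconf e e').1 hc).1⟩

theorem isTrace_iff (h : SubBES ℰ ℱ) (hαE : ∀ e ∈ α, e ∈ ℰ.E) :
    IsTrace ℰ α ↔ IsTrace ℱ α :=
  ⟨h.isTrace_s5, h.isTrace_of_forall_mem_s5 hαE⟩

theorem isConfig (h : SubBES ℰ ℱ) (hx : IsConfig ℰ x) : IsConfig ℱ x := by
  obtain ⟨α, hα, hαx⟩ := hx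
  exact ⟨α, h.isTrace_s5 hα, hαx⟩

/-- Both orders are intersections over the same set of linearisations. -/
theorem configOrder_iff (h : SubBES ℰ ℱ) (hx : x ⊆ ℰ.E) (a b : Ev) :
    configOrder ℰ x a b ↔ configOrder ℱ x a b := by
  refine forall_congr' fun α => ?_
  by_cases hαx : {e | e ∈ α} = x
  · have hαE : ∀ e ∈ α, e ∈ ℰ.E := fun e he => hx (hαx ▸ he)
    rw [h.isTrace_iff hαE]
  · simp only [hαx, false_imp_iff, imp_true_iff]

theorem lab_eq_of_mem (h : SubBES ℰ ℱ) (hx : x ⊆ ℰ.E) {e : Ev} (he : e ∈ x) :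
    ℰ.lab e = ℱ.lab e :=
  h.2.2.2.2.1 e (hx he)

theorem labOn_eq (h : SubBES ℰ ℱ) (hx : x ⊆ ℰ.E) : labOn ℰ x = labOn ℱ x := by
  funext e
  by_cases he : e ∈ x
  · simp only [labOn, he, if_true, h.lab_eq_of_mem hx he]
  · simp only [labOn, he, if_false]

theorem isLposetOf (h : SubBES ℰ ℱ) {o : Ev → Ev → Prop} {l : Ev → Option A}
    (hl : IsLposetOf ℰ x o l) : IsLposetOf ℱ x o l := by
  obtain ⟨hx, ho, rfl⟩ := hl
  refine ⟨h.isConfig hx, fun a b => ?_, h.labOn_eq hx.subset_E⟩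
  rw [ho, h.configOrder_iff hx.subset_E]

end SubBES

theorem subBES_configs_lposets_general {Ev A : Type} (ℰ ℰ' : BES Ev A)
    (h : SubBES ℰ ℰ') :
    ∀ x : Set Ev, IsConfig ℰ x →
      IsConfig ℰ' x ∧
      (∀ a b, a ∈ x → b ∈ x → (configOrder ℰ x a b ↔ configOrder ℰ' x a b)) ∧
      (∀ e ∈ x, ℰ.lab e = ℰ'.lab e) ∧
      (∀ (o : Ev → Ev → Prop) (l : Ev → Option A),
        IsLposetOf ℰ x o l → IsLposetOf ℰ' x o l) := fun _ hx =>
  ⟨h.isConfig hx, fun a b _ _ => h.configOrder_iff hx.subset_E a b,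
    fun _ he => h.lab_eq_of_mem hx.subset_E he, fun _ _ => h.isLposetOf⟩

/-- Corollary: if `ℰ ⊑ ℰ'` then every configuration of `ℰ` is a configuration
of `ℰ'` with the same causal order and labelling, hence `L(ℰ) ⊆ L(ℰ')`. -/
theorem subBES_configs_lposets {Ev A : Type} (ℰ ℰ' : BES Ev A)
    (hE : IsBES ℰ) (hE' : IsBES ℰ') (h : SubBES ℰ ℰ') :
    ∀ x : Set Ev, IsConfig ℰ x →
      IsConfig ℰ' x ∧
      (∀ a b, a ∈ x → b ∈ x → (configOrder ℰ x a b ↔ configOrder ℰ' x a b)) ∧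
      (∀ e ∈ x, ℰ.lab e = ℰ'.lab e) ∧
      (∀ (o : Ev → Ev → Prop) (l : Ev → Option A),
        IsLposetOf ℰ x o l → IsLposetOf ℰ' x o l) :=
  subBES_configs_lposets_general ℰ ℰ' h

end PCKA
end

section
/- Let ℰ be a confusion-free bundle event structure. Then the reflexive closure of the immediate conflict relation #_μ is an equivalence relation on E whose equivalence classes are exactly the sets ⟨e⟩ for e ∈ E; in particular the family {⟨e⟩ | e ∈ E} is a partition of E. -/
open Classical

namespace PCKA

variable {Ev A : Type}

/-!
By Zorn's lemma every event `e` lies in some cluster `K`. Every other member of `K` is in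
immediate conflict with `e`, hence lies in `⟨e⟩` by the first condition of confusion freeness;
so `⟨e⟩ = K` is the unique cluster containing `e`. Since the members of a cluster pairwise
conflict immediately, this gives both the description of `⟨e⟩` and the transitivity of the
reflexive closure of `#_μ`, and two cells sharing an event `f` both equal `⟨f⟩`.
-/

namespace ImmConflict

variable {ℰ : BES Ev A} {e e' : Ev}

theorem symm (hwf : IsBES ℰ) (h : ImmConflict ℰ e e') : ImmConflict ℰ e' e :=
  let ⟨hc, x, hx, hxe, hxe'⟩ := h
  ⟨hwf.2.1 _ _ hc, x, hx, hxe', hxe⟩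

theorem right_mem (hwf : IsBES ℰ) (h : ImmConflict ℰ e e') : e' ∈ ℰ.E :=
  (hwf.2.2.1 _ _ h.1).2

end ImmConflict

section Clusters

variable {ℰ : BES Ev A}

theorem partialCluster_singleton {e : Ev} (he : e ∈ ℰ.E) : PartialCluster ℰ {e} := by
  refine ⟨Set.singleton_subset_iff.2 he, ?_, ?_⟩
  · rintro a rfl b rfl hab
    exact absurd rfl hab
  · rintro a rfl b rfl x hx
    exact hx

theorem PartialCluster.sUnion {c : Set (Set Ev)} (hc : ∀ K ∈ c, PartialCluster ℰ K)
    (hchain : IsChain (· ⊆ ·) c) : PartialCluster ℰ (⋃₀ c) := by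
  refine ⟨Set.sUnion_subset fun K hK => (hc K hK).1, ?_, ?_⟩
  · rintro a ⟨K, hK, haK⟩ b ⟨K', hK', hbK'⟩ hab
    rcases hchain.total hK hK' with h | h
    · exact (hc K' hK').2.1 a (h haK) b hbK' hab
    · exact (hc K hK).2.1 a haK b (h hbK') hab
  · rintro a ⟨K, hK, haK⟩ b ⟨K', hK', hbK'⟩ x hx
    rcases hchain.total hK hK' with h | h
    · exact (hc K' hK').2.2 a (h haK) b hbK' x hx
    · exact (hc K hK).2.2 a haK b (h hbK') x hx

theorem exists_cluster_mem {e : Ev} (he : e ∈ ℰ.E) : ∃ K, Cluster ℰ K ∧ e ∈ K := by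
  obtain ⟨K, heK, hmax⟩ := zorn_subset_nonempty {K | PartialCluster ℰ K}
    (fun c hc hchain _ => ⟨⋃₀ c, PartialCluster.sUnion hc hchain,
      fun _ => Set.subset_sUnion_of_mem⟩)
    {e} (partialCluster_singleton he)
  exact ⟨K, ⟨hmax.prop, fun H hH hKH => (hmax.eq_of_subset hH hKH).symm⟩,
    heK rfl⟩

theorem mem_cell_self (e : Ev) : e ∈ cell ℰ e :=
  Set.mem_sInter.2 fun _ hK => hK.2

theorem cell_eq_of_cluster (hcf : ∀ e e', ImmConflict ℰ e e' → e ∈ cell ℰ e')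
    {K : Set Ev} (hK : Cluster ℰ K) {e : Ev} (he : e ∈ K) : cell ℰ e = K := by
  have hKe : K ∈ {K | Cluster ℰ K ∧ e ∈ K} := ⟨hK, he⟩
  refine (Set.sInter_subset_of_mem hKe).antisymm fun e' he' => ?_
  by_cases hee' : e' = e
  · exact hee' ▸ mem_cell_self e
  · exact hcf e' e (hK.1.2.1 e' he' e he hee')

theorem cluster_cell (hcf : ∀ e e', ImmConflict ℰ e e' → e ∈ cell ℰ e')
    {e : Ev} (he : e ∈ ℰ.E) : Cluster ℰ (cell ℰ e) := by
  obtain ⟨K, hK, heK⟩ := exists_cluster_mem he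
  exact cell_eq_of_cluster hcf hK heK ▸ hK

theorem cell_eq_of_mem_cell (hcf : ∀ e e', ImmConflict ℰ e e' → e ∈ cell ℰ e')
    {e f : Ev} (he : e ∈ ℰ.E) (hf : f ∈ cell ℰ e) : cell ℰ f = cell ℰ e :=
  cell_eq_of_cluster hcf (cluster_cell hcf he) hf

theorem eq_or_immConflict_of_mem_cell (hcf : ∀ e e', ImmConflict ℰ e e' → e ∈ cell ℰ e')
    {e a b : Ev} (he : e ∈ ℰ.E) (ha : a ∈ cell ℰ e) (hb : b ∈ cell ℰ e) :
    a = b ∨ ImmConflict ℰ a b :=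
  (Classical.em (a = b)).imp_right ((cluster_cell hcf he).1.2.1 a ha b hb)

theorem mem_cell_iff (hcf : ∀ e e', ImmConflict ℰ e e' → e ∈ cell ℰ e')
    {e : Ev} (he : e ∈ ℰ.E) (e' : Ev) :
    e' ∈ cell ℰ e ↔ e' ∈ ℰ.E ∧ (e' = e ∨ ImmConflict ℰ e' e) := by
  refine ⟨fun he' => ⟨(cluster_cell hcf he).1.1 he',
    eq_or_immConflict_of_mem_cell hcf he he' (mem_cell_self e)⟩, ?_⟩
  rintro ⟨-, rfl | h⟩
  · exact mem_cell_self e'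
  · exact hcf e' e h

theorem eq_or_immConflict_trans (hwf : IsBES ℰ)
    (hcf : ∀ e e', ImmConflict ℰ e e' → e ∈ cell ℰ e') {e e' e'' : Ev}
    (h₁ : e = e' ∨ ImmConflict ℰ e e') (h₂ : e' = e'' ∨ ImmConflict ℰ e' e'') :
    e = e'' ∨ ImmConflict ℰ e e'' := by
  rcases h₁ with rfl | h₁
  · exact h₂
  rcases h₂ with rfl | h₂
  · exact Or.inr h₁
  exact eq_or_immConflict_of_mem_cell hcf (h₁.right_mem hwf) (hcf e e' h₁)
    (hcf e'' e' (h₂.symm hwf))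

theorem biUnion_cell (hcf : ∀ e e', ImmConflict ℰ e e' → e ∈ cell ℰ e') :
    ⋃ e ∈ ℰ.E, cell ℰ e = ℰ.E :=
  (Set.iUnion₂_subset fun _ he => (cluster_cell hcf he).1.1).antisymm
    fun e he => Set.mem_biUnion he (mem_cell_self e)

theorem cell_eq_or_inter_eq_empty (hcf : ∀ e e', ImmConflict ℰ e e' → e ∈ cell ℰ e')
    {e e' : Ev} (he : e ∈ ℰ.E) (he' : e' ∈ ℰ.E) :
    cell ℰ e = cell ℰ e' ∨ cell ℰ e ∩ cell ℰ e' = ∅ := by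
  refine (Set.eq_empty_or_nonempty _).symm.imp_left fun ⟨f, hfe, hfe'⟩ => ?_
  rw [← cell_eq_of_mem_cell hcf he hfe, cell_eq_of_mem_cell hcf he' hfe']

end Clusters

/-- Proposition 5: in a confusion-free BES, the reflexive closure of immediate
conflict is an equivalence relation on `E` whose classes are exactly the cells
`⟨e⟩`, and the cells partition `E`. -/
theorem confusionFree_partition {Ev A : Type} (ℰ : BES Ev A) (hwf : IsBES ℰ)
    (hcf : ConfusionFree ℰ) :
    (∀ e e', ImmConflict ℰ e e' → ImmConflict ℰ e' e) ∧
    (∀ e e' e'' : Ev, (e = e' ∨ ImmConflict ℰ e e') →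
      (e' = e'' ∨ ImmConflict ℰ e' e'') → (e = e'' ∨ ImmConflict ℰ e e'')) ∧
    (∀ e ∈ ℰ.E, ∀ e' : Ev,
      e' ∈ cell ℰ e ↔ (e' ∈ ℰ.E ∧ (e' = e ∨ ImmConflict ℰ e' e))) ∧
    (⋃ e ∈ ℰ.E, cell ℰ e) = ℰ.E ∧
    (∀ e ∈ ℰ.E, e ∈ cell ℰ e) ∧
    (∀ e ∈ ℰ.E, ∀ e' ∈ ℰ.E, cell ℰ e = cell ℰ e' ∨ cell ℰ e ∩ cell ℰ e' = ∅) :=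
  ⟨fun _ _ h => h.symm hwf,
    fun _ _ _ => eq_or_immConflict_trans hwf hcf.1,
    fun _ he => mem_cell_iff hcf.1 he,
    biUnion_cell hcf.1,
    fun e _ => mem_cell_self e,
    fun _ he _ he' => cell_eq_or_inter_eq_empty hcf.1 he he'⟩

end PCKA
end
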